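/- Let G be a group and let m, l, m', l' ∈ G, and write ⟨⟨S⟩⟩ for the normal closure of a subset S of G. Assume that every element of the quotient group G/⟨⟨m'⟩⟩ is an integer power of the image of l'. Then the image of m normally generates G/⟨⟨l⟩⟩ (i.e. the normal closure of the image of m in G/⟨⟨l⟩⟩ is the whole quotient) if and only if both ⟨⟨{m, l}⟩⟩ = G and ⟨⟨{m', l'}⟩⟩ = G. (This is the group-theoretic content of Proposition 2.4: for a winding number ±1 pattern P ⊆ V, with G = π₁(E(P)), m = m(V), l = ℓ(V), m' = m(P), l' = ℓ(P), the meridian m(V) normally generates π₁(S³ − P̃) = G/⟨⟨ℓ(V)⟩⟩ if and only if each of {m(V), ℓ(V)} and {m(P), ℓ(P)} normally generates π₁(E(P)); the hypothesis records that π₁(V) = G/⟨⟨m(P)⟩⟩ ≅ ℤ is generated by ℓ(P).) -/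
import Mathlib


theorem strong_winding_number_characterization {G : Type*} [Group G]
    (m l m' l' : G)
    (hgen : ∀ x : G ⧸ Subgroup.normalClosure {m'},
      ∃ k : ℤ, x = ((QuotientGroup.mk l' : G ⧸ Subgroup.normalClosure {m'}) ^ k)) :
    Subgroup.normalClosure {(QuotientGroup.mk m : G ⧸ Subgroup.normalClosure {l})} = ⊤ ↔
      (Subgroup.normalClosure {m, l} = ⊤ ∧ Subgroup.normalClosure {m', l'} = ⊤) := by
  -- The second condition follows unconditionally from hgen
  have hml' : Subgroup.normalClosure {m', l'} = ⊤ := by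
    rw [eq_top_iff]
    intro g _
    obtain ⟨k, hk⟩ := hgen (QuotientGroup.mk g)
    have hk' : (QuotientGroup.mk g : G ⧸ Subgroup.normalClosure {m'}) =
        QuotientGroup.mk (l' ^ k) := by
      rw [hk, QuotientGroup.mk_zpow]
    rw [QuotientGroup.eq] at hk'
    have h1 : g⁻¹ * l' ^ k ∈ Subgroup.normalClosure {m', l'} :=
      Subgroup.normalClosure_mono (by simp) hk'
    have h2 : l' ^ k ∈ Subgroup.normalClosure {m', l'} :=
      Subgroup.zpow_mem _ (Subgroup.subset_normalClosure (by simp)) k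
    have : g = l' ^ k * (g⁻¹ * l' ^ k)⁻¹ := by group
    rw [this]
    exact Subgroup.mul_mem _ h2 (Subgroup.inv_mem _ h1)
  set N := Subgroup.normalClosure {l} with hN
  let f := QuotientGroup.mk' N
  have hfsurj : Function.Surjective f := QuotientGroup.mk'_surjective N
  constructor
  · intro h
    refine ⟨?_, hml'⟩
    set K := Subgroup.normalClosure {m, l} with hK
    haveI : (K.map f).Normal :=
      (Subgroup.normalClosure_normal).map f hfsurj
    have hle : Subgroup.normalClosure {(QuotientGroup.mk m : G ⧸ N)} ≤ K.map f := by
      apply Subgroup.normalClosure_le_normal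
      intro x hx
      rw [Set.mem_singleton_iff] at hx
      subst hx
      exact ⟨m, Subgroup.subset_normalClosure (by simp), rfl⟩
    rw [eq_top_iff]
    intro g _
    have : f g ∈ K.map f := hle (h ▸ Subgroup.mem_top _)
    obtain ⟨k, hkK, hfk⟩ := this
    have hker : g * k⁻¹ ∈ N := by
      have : f (g * k⁻¹) = 1 := by
        rw [map_mul, map_inv, hfk, mul_inv_cancel]
      rwa [← QuotientGroup.ker_mk' N, MonoidHom.mem_ker]
    have hNK : N ≤ K := Subgroup.normalClosure_mono (by simp)
    have : g = (g * k⁻¹) * k := by group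
    rw [this]
    exact Subgroup.mul_mem _ (hNK hker) hkK
  · rintro ⟨h1, -⟩
    rw [eq_top_iff]
    intro x _
    obtain ⟨g, rfl⟩ := hfsurj x
    have hnormal : (Subgroup.normalClosure
        {(QuotientGroup.mk m : G ⧸ N)}).comap f |>.Normal :=
      Subgroup.normalClosure_normal.comap f
    have hsub : ({m, l} : Set G) ⊆
        ((Subgroup.normalClosure {(QuotientGroup.mk m : G ⧸ N)}).comap f : Set G) := by
      rintro x (rfl | rfl)
      · exact Subgroup.subset_normalClosure rfl
      · have hx : f x = 1 := (QuotientGroup.eq_one_iff x).mpr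
          (Subgroup.subset_normalClosure rfl)
        rw [SetLike.mem_coe, Subgroup.mem_comap, hx]
        exact Subgroup.one_mem _
    have := Subgroup.normalClosure_le_normal hsub
    exact this (h1 ▸ Subgroup.mem_top g)
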